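/- arXiv:2105.00517 — 2 statements merged into one kernel-verified Lean document; each statement's English description precedes it below -/
import Mathlib

section
/- For any probability mass functions P_a, P_b, P_c on a finite set X of real numbers and any thresholds d₁ ≥ 0 and d₂ ≥ 0, the thresholded optimal transport costs satisfy the generalized triangle inequality OT_{d₁+d₂}(P_a, P_b) ≤ OT_{d₁}(P_a, P_c) + OT_{d₂}(P_c, P_b). -/
open Finset

/-- A probability mass function on a finite set `X` of real numbers. -/
def IsPMF (X : Finset ℝ) (μ : ℝ → ℝ) : Prop :=
  (∀ x ∈ X, 0 ≤ μ x) ∧ ∑ x ∈ X, μ x = 1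

/-- A coupling of `μ` and `ν` on `X`: a nonnegative joint mass function on `X × X`
whose first marginal is `μ` and second marginal is `ν`. -/
def IsCoupling (X : Finset ℝ) (μ ν : ℝ → ℝ) (γ : ℝ → ℝ → ℝ) : Prop :=
  (∀ x ∈ X, ∀ y ∈ X, 0 ≤ γ x y) ∧
  (∀ x ∈ X, ∑ y ∈ X, γ x y = μ x) ∧
  (∀ y ∈ X, ∑ x ∈ X, γ x y = ν y)

/-- The mass that a plan `γ` moves a distance of more than `d`. -/
noncomputable def transportCost (X : Finset ℝ) (d : ℝ) (γ : ℝ → ℝ → ℝ) : ℝ :=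
  ∑ x ∈ X, ∑ y ∈ X, if d < |x - y| then γ x y else 0

/-- The thresholded optimal transport cost `OT_d(μ, ν)`:
the infimum over couplings of `μ` and `ν` of the mass moved more than `d`. -/
noncomputable def OT (X : Finset ℝ) (d : ℝ) (μ ν : ℝ → ℝ) : ℝ :=
  sInf (transportCost X d '' {γ | IsCoupling X μ ν γ})

/-!
Glue a coupling `γ₁` of `(P_a, P_c)` to a coupling `γ₂` of `(P_c, P_b)` along
their common marginal: `π(x, z, y) = γ₁(x, z) γ₂(z, y) / P_c(z)` is a joint law of three points
whose `(x, z)` and `(z, y)` marginals are `γ₁` and `γ₂`, so its `(x, y)` marginal couples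
`P_a` and `P_b`. By the triangle inequality, `|x - y| > d₁ + d₂` forces `|x - z| > d₁` or
`|z - y| > d₂`, so this coupling moves at most `cost γ₁ + cost γ₂` by more than `d₁ + d₂`.
-/

namespace IsCoupling

variable {X : Finset ℝ} {μ ν : ℝ → ℝ} {γ : ℝ → ℝ → ℝ}

lemma snd_nonneg (hγ : IsCoupling X μ ν γ) {z : ℝ} (hz : z ∈ X) : 0 ≤ ν z :=
  hγ.2.2 z hz ▸ sum_nonneg fun x hx => hγ.1 x hx z hz

lemma apply_eq_zero_of_snd_eq_zero (hγ : IsCoupling X μ ν γ) {z : ℝ} (hz : z ∈ X)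
    (h0 : ν z = 0) {x : ℝ} (hx : x ∈ X) : γ x z = 0 :=
  (sum_eq_zero_iff_of_nonneg fun x hx => hγ.1 x hx z hz).mp ((hγ.2.2 z hz).trans h0) x hx

lemma apply_eq_zero_of_fst_eq_zero (hγ : IsCoupling X μ ν γ) {z : ℝ} (hz : z ∈ X)
    (h0 : μ z = 0) {y : ℝ} (hy : y ∈ X) : γ z y = 0 :=
  (sum_eq_zero_iff_of_nonneg fun y hy => hγ.1 z hz y hy).mp ((hγ.2.1 z hz).trans h0) y hy

end IsCoupling

lemma isCoupling_mul {X : Finset ℝ} {μ ν : ℝ → ℝ} (hμ : IsPMF X μ) (hν : IsPMF X ν) :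
    IsCoupling X μ ν (fun x y => μ x * ν y) := by
  refine ⟨fun x hx y hy => mul_nonneg (hμ.1 x hx) (hν.1 y hy), fun x _ => ?_, fun y _ => ?_⟩
  · rw [← mul_sum, hν.2, mul_one]
  · rw [← sum_mul, hμ.2, one_mul]

lemma transportCost_nonneg {X : Finset ℝ} (d : ℝ) {γ : ℝ → ℝ → ℝ}
    (h : ∀ x ∈ X, ∀ y ∈ X, 0 ≤ γ x y) : 0 ≤ transportCost X d γ :=
  sum_nonneg fun x hx => sum_nonneg fun y hy => by
    split_ifs
    exacts [h x hx y hy, le_rfl]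

lemma OT_le_transportCost {X : Finset ℝ} (d : ℝ) {μ ν : ℝ → ℝ} {γ : ℝ → ℝ → ℝ}
    (hγ : IsCoupling X μ ν γ) : OT X d μ ν ≤ transportCost X d γ :=
  csInf_le ⟨0, by rintro _ ⟨γ', hγ', rfl⟩; exact transportCost_nonneg d hγ'.1⟩ ⟨γ, hγ, rfl⟩

/-- Where `ν z = 0` the division yields the junk value `0`, which is harmless: both plans
vanish on such `z`. -/
noncomputable def gluedLaw (ν : ℝ → ℝ) (γ₁ γ₂ : ℝ → ℝ → ℝ) (x z y : ℝ) : ℝ :=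
  γ₁ x z * γ₂ z y / ν z

lemma ite_lt_abs_sub_le_add {d₁ d₂ t : ℝ} (ht : 0 ≤ t) (x z y : ℝ) :
    (if d₁ + d₂ < |x - y| then t else 0) ≤
      (if d₁ < |x - z| then t else 0) + (if d₂ < |z - y| then t else 0) := by
  have := abs_sub_le x z y
  split_ifs <;> linarith

section Gluing

variable {X : Finset ℝ} {μ ν ρ : ℝ → ℝ} {γ₁ γ₂ : ℝ → ℝ → ℝ}
  (hγ₁ : IsCoupling X μ ν γ₁) (hγ₂ : IsCoupling X ν ρ γ₂)
include hγ₁ hγ₂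

lemma gluedLaw_nonneg {x z y : ℝ} (hx : x ∈ X) (hz : z ∈ X) (hy : y ∈ X) :
    0 ≤ gluedLaw ν γ₁ γ₂ x z y :=
  div_nonneg (mul_nonneg (hγ₁.1 x hx z hz) (hγ₂.1 z hz y hy)) (hγ₁.snd_nonneg hz)

lemma sum_gluedLaw_right {x z : ℝ} (hx : x ∈ X) (hz : z ∈ X) :
    ∑ y ∈ X, gluedLaw ν γ₁ γ₂ x z y = γ₁ x z := by
  by_cases h0 : ν z = 0
  · simp [gluedLaw, h0, hγ₁.apply_eq_zero_of_snd_eq_zero hz h0 hx]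
  · simp only [gluedLaw]
    rw [← sum_div, ← mul_sum, hγ₂.2.1 z hz, mul_div_cancel_right₀ _ h0]

lemma sum_gluedLaw_left {z y : ℝ} (hz : z ∈ X) (hy : y ∈ X) :
    ∑ x ∈ X, gluedLaw ν γ₁ γ₂ x z y = γ₂ z y := by
  by_cases h0 : ν z = 0
  · simp [gluedLaw, h0, hγ₂.apply_eq_zero_of_fst_eq_zero hz h0 hy]
  · simp only [gluedLaw, mul_div_right_comm _ (γ₂ z y)]
    rw [← sum_mul, ← sum_div, hγ₁.2.2 z hz, div_self h0, one_mul]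

lemma isCoupling_sum_gluedLaw :
    IsCoupling X μ ρ (fun x y => ∑ z ∈ X, gluedLaw ν γ₁ γ₂ x z y) := by
  refine ⟨fun x hx y hy => sum_nonneg fun z hz => gluedLaw_nonneg hγ₁ hγ₂ hx hz hy,
    fun x hx => ?_, fun y hy => ?_⟩
  · rw [sum_comm, sum_congr rfl fun z hz => sum_gluedLaw_right hγ₁ hγ₂ hx hz, hγ₁.2.1 x hx]
  · rw [sum_comm, sum_congr rfl fun z hz => sum_gluedLaw_left hγ₁ hγ₂ hz hy, hγ₂.2.2 y hy]

lemma transportCost_sum_gluedLaw_le (d₁ d₂ : ℝ) :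
    transportCost X (d₁ + d₂) (fun x y => ∑ z ∈ X, gluedLaw ν γ₁ γ₂ x z y) ≤
      transportCost X d₁ γ₁ + transportCost X d₂ γ₂ := by
  set π := gluedLaw ν γ₁ γ₂
  have hcost₁ : ∑ x ∈ X, ∑ y ∈ X, ∑ z ∈ X, (if d₁ < |x - z| then π x z y else 0) =
      transportCost X d₁ γ₁ := by
    rw [transportCost]
    refine sum_congr rfl fun x hx => ?_
    rw [sum_comm]
    refine sum_congr rfl fun z hz => ?_
    rw [sum_ite_irrel, sum_gluedLaw_right hγ₁ hγ₂ hx hz, sum_const_zero]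
  have hcost₂ : ∑ x ∈ X, ∑ y ∈ X, ∑ z ∈ X, (if d₂ < |z - y| then π x z y else 0) =
      transportCost X d₂ γ₂ := by
    rw [transportCost, sum_comm, sum_congr rfl fun y _ => sum_comm, sum_comm]
    refine sum_congr rfl fun z hz => sum_congr rfl fun y hy => ?_
    rw [sum_ite_irrel, sum_gluedLaw_left hγ₁ hγ₂ hz hy, sum_const_zero]
  calc transportCost X (d₁ + d₂) (fun x y => ∑ z ∈ X, π x z y)
      = ∑ x ∈ X, ∑ y ∈ X, ∑ z ∈ X, (if d₁ + d₂ < |x - y| then π x z y else 0) := by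
        simp only [transportCost, sum_ite_irrel, sum_const_zero]
    _ ≤ ∑ x ∈ X, ∑ y ∈ X, ∑ z ∈ X,
          ((if d₁ < |x - z| then π x z y else 0) + (if d₂ < |z - y| then π x z y else 0)) :=
        sum_le_sum fun x hx => sum_le_sum fun y hy => sum_le_sum fun z hz =>
          ite_lt_abs_sub_le_add (gluedLaw_nonneg hγ₁ hγ₂ hx hz hy) x z y
    _ = transportCost X d₁ γ₁ + transportCost X d₂ γ₂ := by
        simp only [sum_add_distrib, hcost₁, hcost₂]

end Gluing

lemma le_sInf_add_sInf {A B : Set ℝ} {r : ℝ} (hA : A.Nonempty) (hB : B.Nonempty)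
    (h : ∀ a ∈ A, ∀ b ∈ B, r ≤ a + b) : r ≤ sInf A + sInf B := by
  have hA' : ∀ b ∈ B, r - b ≤ sInf A := fun b hb =>
    le_csInf hA fun a ha => by linarith [h a ha b hb]
  have hB' : r - sInf A ≤ sInf B := le_csInf hB fun b hb => by linarith [hA' b hb]
  linarith

theorem ot_generalized_triangle_inequality_general
    (X : Finset ℝ) (Pa Pb Pc : ℝ → ℝ)
    (hPa : IsPMF X Pa) (hPb : IsPMF X Pb) (hPc : IsPMF X Pc)
    (d₁ d₂ : ℝ) :
    OT X (d₁ + d₂) Pa Pb ≤ OT X d₁ Pa Pc + OT X d₂ Pc Pb := by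
  refine le_sInf_add_sInf ⟨_, _, isCoupling_mul hPa hPc, rfl⟩
    ⟨_, _, isCoupling_mul hPc hPb, rfl⟩ ?_
  rintro _ ⟨γ₁, hγ₁, rfl⟩ _ ⟨γ₂, hγ₂, rfl⟩
  exact (OT_le_transportCost _ (isCoupling_sum_gluedLaw hγ₁ hγ₂)).trans
    (transportCost_sum_gluedLaw_le hγ₁ hγ₂ d₁ d₂)

/-- generalized triangle (gluing) inequality for the thresholded
optimal transport cost:
`OT_{d₁+d₂}(P_a, P_b) ≤ OT_{d₁}(P_a, P_c) + OT_{d₂}(P_c, P_b)`. -/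
theorem ot_generalized_triangle_inequality
    (X : Finset ℝ) (Pa Pb Pc : ℝ → ℝ)
    (hPa : IsPMF X Pa) (hPb : IsPMF X Pb) (hPc : IsPMF X Pc)
    (d₁ d₂ : ℝ) (hd₁ : 0 ≤ d₁) (hd₂ : 0 ≤ d₂) :
    OT X (d₁ + d₂) Pa Pb ≤ OT X d₁ Pa Pc + OT X d₂ Pc Pb :=
  ot_generalized_triangle_inequality_general X Pa Pb Pc hPa hPb hPc d₁ d₂
end

section
/- In the market equilibrium model, the implied transaction cost is strictly decreasing in the volume of trade: if F is nondecreasing, the market clears at volume s·q at (p, t) and at volume s′·q at (p′, t′), and 0 < s < s′, then t > t′. In particular, the transaction cost implied by a lower-bound estimate of the share of trade is an upper bound for the transaction cost implied by the true share. -/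
/-! Supply pins the seller cutoff through `F (p - t) = s`, and demand pins the buyer cutoff
through `F (p + t) = 1 - s q / (N - q)`. A larger volume raises the first value and lowers the
second, so by monotonicity of `F` the seller cutoff rises and the buyer cutoff falls: the band
`[p - t, p + t]` of width `2 t` shrinks. -/

/-- The market clears at volume of trade `s * q` at price `p` and per-side
transaction cost `t`: demand `(N - q) * (1 - F (p + t))` and supply
`q * F (p - t)` both equal `s * q`. -/
def Clears (N q : ℝ) (F : ℝ → ℝ) (s p t : ℝ) : Prop :=
  (N - q) * (1 - F (p + t)) = s * q ∧ q * F (p - t) = s * q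

namespace Clears

variable {N q : ℝ} {F : ℝ → ℝ} {s p t : ℝ}

theorem apply_sub_eq (hq : q ≠ 0) (h : Clears N q F s p t) : F (p - t) = s :=
  mul_left_cancel₀ hq (h.2.trans (mul_comm s q))

theorem apply_add_eq (hqN : N - q ≠ 0) (h : Clears N q F s p t) :
    F (p + t) = 1 - s * q / (N - q) := by
  rw [eq_sub_iff_add_eq, ← h.1]
  field_simp
  ring

end Clears

theorem transaction_cost_strictly_decreasing_in_share_general
    (N q : ℝ) (hq : 0 < q) (hqN : q < N)
    (F : ℝ → ℝ)
    (hFmono : Monotone F)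
    (s s' p t p' t' : ℝ) (hss' : s < s')
    (h : Clears N q F s p t) (h' : Clears N q F s' p' t') :
    t > t' := by
  have hNq : 0 < N - q := sub_pos.mpr hqN
  have hsell : p - t < p' - t' := hFmono.reflect_lt <| by
    rwa [h.apply_sub_eq hq.ne', h'.apply_sub_eq hq.ne']
  have hbuy : p' + t' < p + t := hFmono.reflect_lt <| by
    rw [h.apply_add_eq hNq.ne', h'.apply_add_eq hNq.ne']
    gcongr
  linarith

/-- the implied transaction cost is strictly decreasing in the
volume of trade: if `F` is nondecreasing, the market clears at volume `s * q`
at `(p, t)` and at volume `s' * q` at `(p', t')`, and `0 < s < s'`, then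
`t > t'`. -/
theorem transaction_cost_strictly_decreasing_in_share
    (N q : ℝ) (hq : 0 < q) (hqN : q < N)
    (F : ℝ → ℝ) (hF01 : ∀ v, 0 ≤ F v ∧ F v ≤ 1)
    (hFmono : Monotone F)
    (s s' p t p' t' : ℝ) (hs0 : 0 < s) (hss' : s < s')
    (h : Clears N q F s p t) (h' : Clears N q F s' p' t') :
    t > t' :=
  transaction_cost_strictly_decreasing_in_share_general N q hq hqN F hFmono s s' p t p' t' hss' h h'
end
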